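/- arXiv:0901.2444 — 9 statements merged into one kernel-verified Lean document; each statement's English description precedes it below -/
import Mathlib

section
/- Let A and B be commuting n×n real matrices and let M, Ω ∈ so(n) satisfy the Manakov condition [M, B] = [Ω, A]. Then for every λ ∈ ℝ one has [M + λA, Ω + λB] = [M, Ω]; that is, the Euler equation Ṁ = [M, Ω] admits the Lax representation d/dt(M + λA) = [M + λA, Ω + λB] with rational parameter λ. -/
open Matrix

/-- If `A` and `B` commute and `M, Ω ∈ so(n)` satisfy the Manakov condition
`[M, B] = [Ω, A]`, then for every `λ ∈ ℝ` one has `[M + λA, Ω + λB] = [M, Ω]`,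
i.e. the Euler equation admits the Lax representation with rational parameter `λ`. -/
theorem lax_representation (n : ℕ) (A B M Ω : Matrix (Fin n) (Fin n) ℝ)
    (hAB : A * B = B * A) (hM : Mᵀ = -M) (hΩ : Ωᵀ = -Ω)
    (hManakov : M * B - B * M = Ω * A - A * Ω) :
    ∀ lam : ℝ,
      (M + lam • A) * (Ω + lam • B) - (Ω + lam • B) * (M + lam • A)
        = M * Ω - Ω * M := by
  intro lam
  have h : M * B + A * Ω = B * M + Ω * A := by
    linear_combination (norm := noncomm_ring) hManakov
  simp only [add_mul, mul_add, smul_mul_assoc, mul_smul_comm, smul_smul]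
  linear_combination (norm := module) lam • h + (lam*lam) • hAB
end

section
/- Let A and B be commuting n×n real matrices and let M : ℝ → so(n) be a differentiable curve and Ω : ℝ → so(n) a curve such that Ṁ(t) = [M(t), Ω(t)] and [M(t), B] = [Ω(t), A] for all t. Then for every k ∈ ℕ and every λ ∈ ℝ the function t ↦ tr((M(t) + λA)^k) is constant; i.e., all polynomials tr((M + λA)^k) are first integrals of the Manakov flow. -/
/-!
Along the flow, `L = M + λA` satisfies the Lax equation `L̇ = [L, Ω + λB]`: expanding the
commutator, the `λ`-term vanishes by the Manakov condition and the `λ²`-term because `A` and `B`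
commute. By the Leibniz rule every power then satisfies `(L^k)˙ = [L^k, Ω + λB]`, and the trace of a
commutator is zero.
-/

open Matrix

section LaxPair

variable {𝕜 R : Type*} [CommRing 𝕜] [Ring R] [Algebra 𝕜 R]

theorem manakov_lax_pair {A B M Ω : R} (hAB : A * B = B * A)
    (hManakov : M * B - B * M = Ω * A - A * Ω) (lam : 𝕜) :
    (M + lam • A) * (Ω + lam • B) - (Ω + lam • B) * (M + lam • A) = M * Ω - Ω * M := by
  have hexpand : (M + lam • A) * (Ω + lam • B) - (Ω + lam • B) * (M + lam • A)
      = (M * Ω - Ω * M) + lam • ((M * B - B * M) - (Ω * A - A * Ω))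
        + (lam * lam) • (A * B - B * A) := by
    simp only [add_mul, mul_add, smul_mul_assoc, mul_smul_comm, smul_smul, smul_sub, smul_add]
    abel
  rw [hexpand, hManakov, hAB]
  simp

end LaxPair

namespace Matrix

variable {m : Type*}

section Entrywise

variable {𝕜 : Type*} [NontriviallyNormedField 𝕜]

/-- Matrices carry no canonical norm, so curves of matrices are differentiated entrywise. -/
def HasEntrywiseDerivAt (X : 𝕜 → Matrix m m 𝕜) (X' : Matrix m m 𝕜) (t : 𝕜) : Prop :=
  ∀ i j, HasDerivAt (fun s => X s i j) (X' i j) t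

namespace HasEntrywiseDerivAt

variable {X Y : 𝕜 → Matrix m m 𝕜} {X' Y' : Matrix m m 𝕜} {t : 𝕜}

theorem add_const (hX : HasEntrywiseDerivAt X X' t) (C : Matrix m m 𝕜) :
    HasEntrywiseDerivAt (fun s => X s + C) X' t :=
  fun i j => (hX i j).add_const (C i j)

theorem mul [Fintype m] (hX : HasEntrywiseDerivAt X X' t) (hY : HasEntrywiseDerivAt Y Y' t) :
    HasEntrywiseDerivAt (fun s => X s * Y s) (X' * Y t + X t * Y') t := by
  intro i j
  simp only [add_apply, mul_apply, ← Finset.sum_add_distrib]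
  exact HasDerivAt.fun_sum fun k _ => (hX i k).mul (hY k j)

theorem pow_of_lax [Fintype m] [DecidableEq m] {W : Matrix m m 𝕜}
    (hX : HasEntrywiseDerivAt X (X t * W - W * X t) t) (k : ℕ) :
    HasEntrywiseDerivAt (fun s => X s ^ k) (X t ^ k * W - W * X t ^ k) t := by
  induction k with
  | zero =>
    intro i j
    simpa using hasDerivAt_const t ((1 : Matrix m m 𝕜) i j)
  | succ k ih =>
    have hleibniz : X t ^ k * X t * W - W * (X t ^ k * X t)
        = (X t ^ k * W - W * X t ^ k) * X t + X t ^ k * (X t * W - W * X t) := by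
      noncomm_ring
    simpa only [pow_succ, hleibniz] using ih.mul hX

theorem trace [Fintype m] (hX : HasEntrywiseDerivAt X X' t) :
    HasDerivAt (fun s => (X s).trace) X'.trace t :=
  HasDerivAt.fun_sum fun i _ => hX i i

end HasEntrywiseDerivAt

end Entrywise

theorem trace_pow_eq_of_lax {𝕜 : Type*} [RCLike 𝕜] [Fintype m] [DecidableEq m] {L W : 𝕜 → Matrix m m 𝕜}
    (hL : ∀ t, HasEntrywiseDerivAt L (L t * W t - W t * L t) t) (k : ℕ) (s t : 𝕜) :
    (L s ^ k).trace = (L t ^ k).trace := by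
  have hderiv : ∀ u, HasDerivAt (fun v => (L v ^ k).trace) 0 u := fun u => by
    simpa [trace_sub, trace_mul_comm (L u ^ k)] using ((hL u).pow_of_lax k).trace
  exact is_const_of_deriv_eq_zero (fun u => (hderiv u).differentiableAt)
    (fun u => (hderiv u).deriv) s t

end Matrix

theorem manakov_integrals_are_conserved_general (n : ℕ) (A B : Matrix (Fin n) (Fin n) ℝ)
    (hAB : A * B = B * A)
    (M Ω : ℝ → Matrix (Fin n) (Fin n) ℝ)
    (hflow : ∀ t i j, HasDerivAt (fun s => M s i j) ((M t * Ω t - Ω t * M t) i j) t)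
    (hManakov : ∀ t, M t * B - B * M t = Ω t * A - A * Ω t) :
    ∀ (k : ℕ) (lam : ℝ) (s t : ℝ),
      ((M s + lam • A) ^ k).trace = ((M t + lam • A) ^ k).trace := by
  intro k lam
  have hlax : ∀ t, HasEntrywiseDerivAt (fun s => M s + lam • A)
      ((M t + lam • A) * (Ω t + lam • B) - (Ω t + lam • B) * (M t + lam • A)) t := fun t => by
    rw [manakov_lax_pair hAB (hManakov t)]
    exact HasEntrywiseDerivAt.add_const (hflow t) _
  exact trace_pow_eq_of_lax hlax k

/-- Along a solution of the Euler equation `Ṁ = [M, Ω]` satisfying the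
Manakov condition `[M(t), B] = [Ω(t), A]` with `A`, `B` commuting, every function
`t ↦ tr((M(t) + λA)^k)` is constant: the polynomials `tr((M + λA)^k)` are first
integrals of the Manakov flow. -/
theorem manakov_integrals_are_conserved (n : ℕ) (A B : Matrix (Fin n) (Fin n) ℝ)
    (hAB : A * B = B * A)
    (M Ω : ℝ → Matrix (Fin n) (Fin n) ℝ)
    (hMskew : ∀ t, (M t)ᵀ = -(M t)) (hΩskew : ∀ t, (Ω t)ᵀ = -(Ω t))
    (hflow : ∀ t i j, HasDerivAt (fun s => M s i j) ((M t * Ω t - Ω t * M t) i j) t)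
    (hManakov : ∀ t, M t * B - B * M t = Ω t * A - A * Ω t) :
    ∀ (k : ℕ) (lam : ℝ) (s t : ℝ),
      ((M s + lam • A) ^ k).trace = ((M t + lam • A) ^ k).trace :=
  manakov_integrals_are_conserved_general n A B hAB M Ω hflow hManakov
end

section
/- Let M ∈ v, and define Ω ∈ v entrywise by Ω_ij = ((β_p − β_q)/(α_p − α_q))·M_ij whenever the index i lies in the p-th block and j lies in the q-th block with p ≠ q (and Ω_ij = 0 when i and j lie in the same block), where β_1,…,β_r are pairwise distinct reals. Then the orthogonal projection of [M, Ω] onto so(n)_A vanishes; equivalently, tr([M, Ω]·X) = 0 for every X ∈ so(n)_A. (This is the identity [M_v, ad_A^{-1} ad_B (M_v)]_{so(n)_A} = 0 underlying the singular Manakov flow.) -/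
open Matrix

/-- Let `{1,…,n}` be partitioned into consecutive blocks of sizes
`k 1, …, k r` (encoded by the monotone block map `blk` with fibers of cardinality `k p`),
let `A = diag(α (blk i))` with `α` injective, let `M ∈ v` (skew with vanishing diagonal
blocks) and define `Ω` entrywise by `Ω i j = ((β p - β q)/(α p - α q)) · M i j` for indices
in distinct blocks `p ≠ q`, with `β` injective. Then the projection of `[M, Ω]` onto
`so(n)_A` vanishes: `tr([M, Ω]·X) = 0` for every `X ∈ so(n)_A`. -/
theorem singular_manakov_projection_vanishes (n r : ℕ) (k : Fin r → ℕ)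
    (hk : ∀ p, 0 < k p) (hsum : ∑ p, k p = n)
    (blk : Fin n → Fin r) (hmono : Monotone blk)
    (hcard : ∀ p, (Finset.univ.filter fun i => blk i = p).card = k p)
    (α β : Fin r → ℝ) (hα : Function.Injective α) (hβ : Function.Injective β)
    (M : Matrix (Fin n) (Fin n) ℝ) (hMskew : Mᵀ = -M)
    (hMv : ∀ i j, blk i = blk j → M i j = 0)
    (Ω : Matrix (Fin n) (Fin n) ℝ)
    (hΩ : ∀ i j, Ω i j = if blk i = blk j then 0
        else ((β (blk i) - β (blk j)) / (α (blk i) - α (blk j))) * M i j)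
    (X : Matrix (Fin n) (Fin n) ℝ) (hX : Xᵀ = -X)
    (hXA : X * Matrix.diagonal (fun i => α (blk i))
         = Matrix.diagonal (fun i => α (blk i)) * X) :
    ((M * Ω - Ω * M) * X).trace = 0 := by
  have hc : ∀ a b c d : ℝ, (a - b) / (c - d) = (b - a) / (d - c) := by
    intro a b c d
    rw [← neg_div_neg_eq]
    ring_nf
  -- X is block diagonal
  have hXb : ∀ l i, blk l ≠ blk i → X l i = 0 := by
    intro l i h
    have h1 := congrFun (congrFun hXA l) i
    rw [Matrix.mul_diagonal, Matrix.diagonal_mul] at h1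
    have h2 : X l i * (α (blk i) - α (blk l)) = 0 := by linarith [h1]
    rcases mul_eq_zero.mp h2 with h3 | h3
    · exact h3
    · exact absurd (hα (by linarith)) (Ne.symm h)
  have expand : ((M * Ω - Ω * M) * X).trace
      = ∑ i, ∑ l, ∑ j, (M i j * Ω j l - Ω i j * M j l) * X l i := by
    simp only [Matrix.trace, Matrix.diag, Matrix.mul_apply, Matrix.sub_apply,
      ← Finset.sum_sub_distrib, Finset.sum_mul]
  rw [expand]
  apply Finset.sum_eq_zero
  intro i _
  apply Finset.sum_eq_zero
  intro l _
  apply Finset.sum_eq_zero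
  intro j _
  by_cases hli : blk l = blk i
  · by_cases hji : blk j = blk i
    · have h1 : M i j = 0 := hMv i j hji.symm
      have h2 : M j l = 0 := hMv j l (hji.trans hli.symm)
      simp [h1, h2]
    · have hjl : blk j ≠ blk l := fun h => hji (h.trans hli)
      rw [hΩ j l, hΩ i j, if_neg hjl, if_neg (Ne.symm hji), hli,
        hc (β (blk j)) (β (blk i)) (α (blk j)) (α (blk i))]
      ring
  · simp [hXb l i hli]
end

section
/- Let B = diag(b_1,…,b_n) be the real diagonal matrix whose entries equal β_p on the p-th block of a partition of {1,…,n} into consecutive blocks of sizes k_1,…,k_r, where β_1,…,β_r are pairwise distinct positive reals. Let M ∈ so(n) and define Ω ∈ so(n) entrywise by Ω_ij = M_ij/(b_i + b_j). Then tr([M, Ω]·X) = 0 for every X ∈ so(n) with XB = BX; that is, the component of [M, Ω] in so(n)_B = {X ∈ so(n) : XB = BX} vanishes, so the Noether momenta M_{so(n)_B} are conserved along the SO(k_1)×⋯×SO(k_r)-symmetric rigid body flow Ṁ = [M, Ω]. -/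
open Matrix

/-- Let `B = diag(b)` where `b i = β (blk i)` is constant on each of the
consecutive blocks of sizes `k 1, …, k r`, with `β 1, …, β r` pairwise distinct and
positive. For `M ∈ so(n)` and `Ω i j = M i j / (b i + b j)`, one has `tr([M, Ω]·X) = 0`
for every `X ∈ so(n)` commuting with `B`: the `so(n)_B`-component of `[M, Ω]` vanishes,
so the Noether momenta are conserved along the symmetric rigid body flow. -/
theorem symmetric_rigid_body_noether (n r : ℕ) (k : Fin r → ℕ)
    (hk : ∀ p, 0 < k p) (hsum : ∑ p, k p = n)
    (blk : Fin n → Fin r) (hmono : Monotone blk)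
    (hcard : ∀ p, (Finset.univ.filter fun i => blk i = p).card = k p)
    (β : Fin r → ℝ) (hβpos : ∀ p, 0 < β p) (hβ : Function.Injective β)
    (b : Fin n → ℝ) (hb : ∀ i, b i = β (blk i))
    (M : Matrix (Fin n) (Fin n) ℝ) (hM : Mᵀ = -M)
    (Ω : Matrix (Fin n) (Fin n) ℝ)
    (hΩ : ∀ i j, Ω i j = M i j / (b i + b j))
    (X : Matrix (Fin n) (Fin n) ℝ) (hX : Xᵀ = -X)
    (hXB : X * Matrix.diagonal b = Matrix.diagonal b * X) :
    ((M * Ω - Ω * M) * X).trace = 0 := by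
  -- X commutes with diag b, so nonzero entries of X connect equal b-values
  have hcomm : ∀ i j : Fin n, X i j ≠ 0 → b i = b j := by
    intro i j h
    have h1 : X i j * b j = b i * X i j := by
      have := congrFun (congrFun hXB i) j
      simpa [Matrix.mul_diagonal, Matrix.diagonal_mul] using this
    have h2 : (b i - b j) * X i j = 0 := by ring_nf; linarith
    rcases mul_eq_zero.mp h2 with h3 | h3
    · linarith [sub_eq_zero.mp h3]
    · exact absurd h3 h
  have hΩX : ∀ i j, (Ω * X) i j = (M * X) i j / (b i + b j) := by
    intro i j
    simp only [Matrix.mul_apply]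
    rw [Finset.sum_div]
    refine Finset.sum_congr rfl fun l _ => ?_
    by_cases h : X l j = 0
    · simp [h]
    · rw [hΩ, hcomm l j h]; ring
  have hXΩ : ∀ i j, (X * Ω) i j = (X * M) i j / (b i + b j) := by
    intro i j
    simp only [Matrix.mul_apply]
    rw [Finset.sum_div]
    refine Finset.sum_congr rfl fun l _ => ?_
    by_cases h : X i l = 0
    · simp [h]
    · rw [hΩ, ← hcomm i l h]; ring
  set T := ((M * Ω - Ω * M) * X).trace with hT
  -- First representation: T = tr (M * (ΩX - XΩ))
  have h1 : T = ∑ i, ∑ j, M i j * (((M * X) j i - (X * M) j i) / (b j + b i)) := by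
    have tr_exp : ∀ (A : Matrix (Fin n) (Fin n) ℝ),
        (M * A).trace = ∑ i, ∑ j, M i j * A j i := fun A => by
      simp [Matrix.trace, Matrix.mul_apply]
    have e : T = (M * (Ω * X)).trace - (M * (X * Ω)).trace := by
      rw [hT, sub_mul, Matrix.trace_sub, ← Matrix.trace_mul_cycle M X Ω,
        mul_assoc M Ω X, mul_assoc M X Ω]
    rw [e, tr_exp, tr_exp, ← Finset.sum_sub_distrib]
    refine Finset.sum_congr rfl fun i _ => ?_
    rw [← Finset.sum_sub_distrib]
    refine Finset.sum_congr rfl fun j _ => ?_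
    rw [hΩX, hXΩ]; ring
  -- Second representation: T = tr (Ω * (XM - MX))
  have h2 : T = ∑ i, ∑ j, (M i j / (b i + b j)) * ((X * M) j i - (M * X) j i) := by
    have tr_exp : ∀ (A : Matrix (Fin n) (Fin n) ℝ),
        (Ω * A).trace = ∑ i, ∑ j, Ω i j * A j i := fun A => by
      simp [Matrix.trace, Matrix.mul_apply]
    have e : T = (Ω * (X * M)).trace - (Ω * (M * X)).trace := by
      rw [hT, sub_mul, Matrix.trace_sub, Matrix.trace_mul_cycle M Ω X,
        Matrix.trace_mul_comm (X * M) Ω, mul_assoc Ω M X]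
    rw [e, tr_exp, tr_exp, ← Finset.sum_sub_distrib]
    refine Finset.sum_congr rfl fun i _ => ?_
    rw [← Finset.sum_sub_distrib]
    refine Finset.sum_congr rfl fun j _ => ?_
    rw [hΩ, ← mul_sub]
  have hsum0 : (∑ i, ∑ j, (M i j * (((M * X) j i - (X * M) j i) / (b j + b i))
      + (M i j / (b i + b j)) * ((X * M) j i - (M * X) j i))) = 0 := by
    refine Finset.sum_eq_zero fun i _ => Finset.sum_eq_zero fun j _ => ?_
    rw [add_comm (b j) (b i)]
    ring
  have : T + T = 0 := by
    nth_rewrite 1 [h1]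
    nth_rewrite 1 [h2]
    rw [← hsum0]
    rw [← Finset.sum_add_distrib]
    refine Finset.sum_congr rfl fun i _ => ?_
    rw [← Finset.sum_add_distrib]
  linarith
end

section
/- Let A be a symmetric n×n real matrix. Then the operation [X, Y]_A = XAY − YAX maps so(n)×so(n) into so(n), is bilinear and antisymmetric, and satisfies the Jacobi identity, so it defines a second Lie algebra structure on the vector space so(n). Moreover, for all λ_1, λ_2 ∈ ℝ one has λ_1[X,Y] + λ_2[X,Y]_A = [X,Y]_{λ_1 I + λ_2 A} for all X, Y ∈ so(n); in particular every linear combination of the standard bracket and [·,·]_A is again a Lie bracket, i.e., the two brackets are compatible. -/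
open Matrix

/-- For a symmetric matrix `A`, the operation `[X, Y]_A = XAY − YAX`
maps `so(n) × so(n)` into `so(n)`, is bilinear and antisymmetric, satisfies the Jacobi
identity (so it defines a second Lie algebra structure on `so(n)`), and for all
`λ₁, λ₂ ∈ ℝ` one has `λ₁[X,Y] + λ₂[X,Y]_A = [X,Y]_{λ₁I + λ₂A}`; in particular every
linear combination of the standard bracket and `[·,·]_A` is again a Lie bracket, i.e.
the two brackets are compatible. -/
theorem bracket_A_is_compatible_lie_bracket (n : ℕ)
    (A : Matrix (Fin n) (Fin n) ℝ) (hA : Aᵀ = A) :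
    -- maps so(n) × so(n) into so(n)
    (∀ X Y : Matrix (Fin n) (Fin n) ℝ, Xᵀ = -X → Yᵀ = -Y →
      (X * A * Y - Y * A * X)ᵀ = -(X * A * Y - Y * A * X)) ∧
    -- antisymmetry
    (∀ X Y : Matrix (Fin n) (Fin n) ℝ,
      X * A * Y - Y * A * X = -(Y * A * X - X * A * Y)) ∧
    -- bilinearity (in the first argument; together with antisymmetry, in both)
    (∀ (c : ℝ) (X₁ X₂ Y : Matrix (Fin n) (Fin n) ℝ),
      (X₁ + c • X₂) * A * Y - Y * A * (X₁ + c • X₂)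
        = (X₁ * A * Y - Y * A * X₁) + c • (X₂ * A * Y - Y * A * X₂)) ∧
    -- Jacobi identity
    (∀ X Y Z : Matrix (Fin n) (Fin n) ℝ, Xᵀ = -X → Yᵀ = -Y → Zᵀ = -Z →
      (X * A * (Y * A * Z - Z * A * Y) - (Y * A * Z - Z * A * Y) * A * X)
      + (Y * A * (Z * A * X - X * A * Z) - (Z * A * X - X * A * Z) * A * Y)
      + (Z * A * (X * A * Y - Y * A * X) - (X * A * Y - Y * A * X) * A * Z) = 0) ∧
    -- pencil identity: compatibility of the two brackets
    (∀ (l₁ l₂ : ℝ) (X Y : Matrix (Fin n) (Fin n) ℝ), Xᵀ = -X → Yᵀ = -Y →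
      l₁ • (X * Y - Y * X) + l₂ • (X * A * Y - Y * A * X)
        = X * (l₁ • (1 : Matrix (Fin n) (Fin n) ℝ) + l₂ • A) * Y
          - Y * (l₁ • (1 : Matrix (Fin n) (Fin n) ℝ) + l₂ • A) * X) := by
  refine ⟨?_, ?_, ?_, ?_, ?_⟩
  · intro X Y hX hY
    simp only [transpose_sub, transpose_mul, hA, hX, hY]
    noncomm_ring
  · intro X Y; abel
  · intro c X₁ X₂ Y
    simp only [add_mul, mul_add, Matrix.smul_mul, Matrix.mul_smul, smul_sub]
    abel
  · intro X Y Z _ _ _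
    noncomm_ring
  · intro l₁ l₂ X Y _ _
    simp only [add_mul, mul_add, Matrix.smul_mul, Matrix.mul_smul, smul_sub, mul_one, one_mul]
    abel
end

section
/- Let A be a real diagonal n×n matrix. Then for all M ∈ so(n), all j, l ∈ ℕ and all λ, μ ∈ ℝ: tr( M · [ π((M + λA)^j), π((M + μA)^l) ] ) = 0, where π(P) = (P − Pᵀ)/2 is the skew-symmetric part and [X,Y] = XY − YX. (This says the Manakov integrals f_{λ,k}(M) = tr((M+λA)^k) pairwise Poisson commute with respect to the Lie–Poisson bracket {f,g}(M) = −⟨M, [∇f(M), ∇g(M)]⟩ on so(n).) -/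
open Matrix

/-- The skew-symmetric part `π(P) = (P − Pᵀ)/2` of a matrix. -/
noncomputable def skewPart {n : ℕ} (P : Matrix (Fin n) (Fin n) ℝ) :
    Matrix (Fin n) (Fin n) ℝ :=
  (1 / 2 : ℝ) • (P - Pᵀ)

section ManakovAux
variable {n : ℕ}

lemma trace_skew_mul_symm (M Y : Matrix (Fin n) (Fin n) ℝ)
    (hM : Mᵀ = -M) (hY : Yᵀ = Y) : (M * Y).trace = 0 := by
  have h : (M * Y).trace = -(M * Y).trace := by
    conv_lhs => rw [← Matrix.trace_transpose, Matrix.transpose_mul, hY, hM,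
      Matrix.mul_neg, Matrix.trace_neg, Matrix.trace_mul_comm]
  linarith

lemma comm_pow (M A : Matrix (Fin n) (Fin n) ℝ) (c : ℝ) (k : ℕ) :
    M*((M + c•A)^k) - ((M + c•A)^k)*M
      = c • (((M + c•A)^k)*A) - c • (A*((M + c•A)^k)) := by
  have h : (M + c•A) * (M + c•A)^k = (M + c•A)^k * (M + c•A) :=
    (Commute.refl _).pow_right k
  rw [add_mul, mul_add, smul_mul_assoc, mul_smul_comm] at h
  rw [sub_eq_sub_iff_add_eq_add, h, add_comm]

lemma key_step (M A X Y Z : Matrix (Fin n) (Fin n) ℝ) (c : ℝ)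
    (h : M*X - X*M = c • (Z*A - A*Z)) :
    (M*(X*Y - Y*X)).trace = c * (A*(Y*Z - Z*Y)).trace := by
  have h1 : (M*(X*Y - Y*X)).trace = ((M*X - X*M)*Y).trace := by
    rw [mul_sub, sub_mul, trace_sub, trace_sub, ← mul_assoc]
    congr 1
    rw [trace_mul_comm M (Y*X), mul_assoc, Matrix.trace_mul_cycle, ← mul_assoc]
  rw [h1, h, smul_mul_assoc, trace_smul, smul_eq_mul]
  congr 1
  rw [sub_mul, mul_sub, trace_sub, trace_sub]
  congr 1
  · rw [Matrix.trace_mul_cycle Z A Y, Matrix.trace_mul_cycle Y Z A, mul_assoc]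
  · rw [← mul_assoc]

lemma comm_pow_T (M A : Matrix (Fin n) (Fin n) ℝ) (hM : Mᵀ = -M) (hA : Aᵀ = A)
    (c : ℝ) (k : ℕ) :
    M*((M + c•A)^k)ᵀ - ((M + c•A)^k)ᵀ*M
      = c • (A*((M + c•A)^k)ᵀ) - c • (((M + c•A)^k)ᵀ*A) := by
  have h1 := congrArg Matrix.transpose (comm_pow M A c k)
  simp only [transpose_sub, transpose_mul, transpose_smul, hM, hA,
    mul_neg, neg_mul, sub_neg_eq_add] at h1
  rw [← h1]; abel

lemma comm_skewPart (M A : Matrix (Fin n) (Fin n) ℝ) (hM : Mᵀ = -M) (hA : Aᵀ = A)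
    (c : ℝ) (k : ℕ) :
    M*(((M + c•A)^k) - ((M + c•A)^k)ᵀ) - (((M + c•A)^k) - ((M + c•A)^k)ᵀ)*M
      = c • (((((M + c•A)^k) + ((M + c•A)^k)ᵀ))*A - A*((((M + c•A)^k) + ((M + c•A)^k)ᵀ))) := by
  have h0 := comm_pow M A c k
  have h2 := comm_pow_T M A hM hA c k
  simp only [mul_sub, sub_mul, add_mul, mul_add, smul_add, smul_sub]
  linear_combination (norm := module) h0 - h2

lemma comm_symPart (M A : Matrix (Fin n) (Fin n) ℝ) (hM : Mᵀ = -M) (hA : Aᵀ = A)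
    (c : ℝ) (k : ℕ) :
    M*(((M + c•A)^k) + ((M + c•A)^k)ᵀ) - (((M + c•A)^k) + ((M + c•A)^k)ᵀ)*M
      = c • (((((M + c•A)^k) - ((M + c•A)^k)ᵀ))*A - A*((((M + c•A)^k) - ((M + c•A)^k)ᵀ))) := by
  have h0 := comm_pow M A c k
  have h2 := comm_pow_T M A hM hA c k
  simp only [mul_sub, sub_mul, add_mul, mul_add, smul_add, smul_sub]
  linear_combination (norm := module) h0 + h2

lemma flip_trace (M X Y : Matrix (Fin n) (Fin n) ℝ) :
    (M*(X - Y)).trace = -((M*(Y - X)).trace) := by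
  rw [← neg_sub, mul_neg, trace_neg]

lemma main_aux (M A P Q K S K' S' : Matrix (Fin n) (Fin n) ℝ) (hM : Mᵀ = -M)
    (lam mu : ℝ)
    (hKd : K = P - Pᵀ) (hSd : S = P + Pᵀ) (hK'd : K' = Q - Qᵀ) (hS'd : S' = Q + Qᵀ)
    (hKrel : M*K - K*M = lam • (S*A - A*S))
    (hSrel : M*S - S*M = lam • (K*A - A*K))
    (hK'rel : M*K' - K'*M = mu • (S'*A - A*S'))
    (hS'rel : M*S' - S'*M = mu • (K'*A - A*K'))
    (hcase : (lam = mu ∧ P*Q = Q*P) ∨ (lam = -mu ∧ P*Qᵀ = Qᵀ*P) ∨ (lam ≠ mu ∧ lam ≠ -mu)) :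
    (M*(K*K' - K'*K)).trace = 0 := by
  have E1 := key_step M A K K' S lam hKrel
  have E2 := key_step M A K' K S' mu hK'rel
  have E3 := key_step M A S S' K lam hSrel
  have E4 := key_step M A S' S K' mu hS'rel
  set T : ℝ := (M*(K*K' - K'*K)).trace with hT
  set W : ℝ := (M*(S*S' - S'*S)).trace with hW
  set p : ℝ := (A*(K'*S - S*K')).trace with hp
  set q : ℝ := (A*(S'*K - K*S')).trace with hq
  rw [flip_trace, ← hT, flip_trace, ← hq] at E2
  rw [flip_trace, ← hW, flip_trace, ← hp] at E4
  -- E1 : T = lam * p; E2 : -T = mu * -q; E3 : W = lam * q; E4 : -W = mu * -p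
  have e2 : T = mu * q := by linarith [E2, mul_neg mu q]
  have e4 : W = mu * p := by linarith [E4, mul_neg mu p]
  rcases hcase with ⟨hlm, hc⟩ | ⟨hlm, hc⟩ | ⟨h1, h2⟩
  · -- lam = mu, P Q commute : T + W = 0 and T = W
    have hsplit : K*K' - K'*K + (S*S' - S'*S) + (S*K' + K*S' - K'*S - S'*K)
        = (P+P)*(Q+Q) - (Q+Q)*(P+P) := by
      rw [hKd, hSd, hK'd, hS'd]; noncomm_ring
    have hzero : (P+P)*(Q+Q) - (Q+Q)*(P+P) = 0 := by
      simp only [add_mul, mul_add, hc]; abel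
    have hX1T : (S*K' + K*S' - K'*S - S'*K)ᵀ = S*K' + K*S' - K'*S - S'*K := by
      rw [hKd, hSd, hK'd, hS'd]
      simp only [transpose_sub, transpose_add, transpose_mul, transpose_transpose]
      noncomm_ring
    have htr : T + W + (M*(S*K' + K*S' - K'*S - S'*K)).trace = 0 := by
      have h5 := congrArg (fun Z => (M*Z).trace) (hsplit.trans hzero)
      simpa only [mul_add, trace_add, mul_zero, trace_zero, hT, hW] using h5
    have hX1 : (M*(S*K' + K*S' - K'*S - S'*K)).trace = 0 :=
      trace_skew_mul_symm _ _ hM hX1T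
    -- T = mu*q, W = lam*q = mu*q so T = W; T + W = 0
    rw [hlm] at E3
    linarith
  · -- lam = -mu, P Qᵀ commute : W - T = 0 and T = -W
    have hsplit : (S*S' - S'*S) - (K*K' - K'*K) + (K*S' + K'*S - S*K' - S'*K)
        = (P+P)*(Qᵀ+Qᵀ) - (Qᵀ+Qᵀ)*(P+P) := by
      rw [hKd, hSd, hK'd, hS'd]; noncomm_ring
    have hzero : (P+P)*(Qᵀ+Qᵀ) - (Qᵀ+Qᵀ)*(P+P) = 0 := by
      simp only [add_mul, mul_add, hc]; abel
    have hX2T : (K*S' + K'*S - S*K' - S'*K)ᵀ = K*S' + K'*S - S*K' - S'*K := by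
      rw [hKd, hSd, hK'd, hS'd]
      simp only [transpose_sub, transpose_add, transpose_mul, transpose_transpose]
      noncomm_ring
    have htr : W - T + (M*(K*S' + K'*S - S*K' - S'*K)).trace = 0 := by
      have h5 := congrArg (fun Z => (M*Z).trace) (hsplit.trans hzero)
      simpa only [mul_add, mul_sub, trace_add, trace_sub, mul_zero, trace_zero, hT, hW] using h5
    have hX2 : (M*(K*S' + K'*S - S*K' - S'*K)).trace = 0 :=
      trace_skew_mul_symm _ _ hM hX2T
    -- T = lam*p, W = mu*p = -lam*p, T = W ⇒ T = 0
    have : W = -(lam * p) := by rw [e4, hlm]; ring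
    linarith
  · -- lam ≠ ± mu : p = 0
    have h5 : (lam - mu) * (lam + mu) * p = 0 := by
      linear_combination lam * e2 - lam * E1 + mu * e4 - mu * E3
    have h6 : p = 0 := by
      rcases mul_eq_zero.mp h5 with h7 | h7
      · rcases mul_eq_zero.mp h7 with h8 | h8
        · exact absurd (by linarith : lam = mu) h1
        · exact absurd (by linarith : lam = -mu) h2
      · exact h7
    rw [E1, h6, mul_zero]
end ManakovAux

/-- For a real diagonal matrix `A`, all `M ∈ so(n)`, `j, l ∈ ℕ` and
`λ, μ ∈ ℝ`: `tr(M · [π((M + λA)^j), π((M + μA)^l)]) = 0`, i.e. the Manakov integrals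
`tr((M + λA)^k)` pairwise Poisson commute with respect to the Lie–Poisson bracket
on `so(n)`. -/
theorem manakov_integrals_poisson_commute (n : ℕ) (a : Fin n → ℝ)
    (M : Matrix (Fin n) (Fin n) ℝ) (hM : Mᵀ = -M)
    (j l : ℕ) (lam mu : ℝ) :
    (M * (skewPart ((M + lam • Matrix.diagonal a) ^ j)
            * skewPart ((M + mu • Matrix.diagonal a) ^ l)
          - skewPart ((M + mu • Matrix.diagonal a) ^ l)
            * skewPart ((M + lam • Matrix.diagonal a) ^ j))).trace = 0 := by
  have hA : (Matrix.diagonal a)ᵀ = Matrix.diagonal a := Matrix.diagonal_transpose a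
  set A := Matrix.diagonal a with hAdef
  set P := (M + lam•A)^j with hPdef
  set Q := (M + mu•A)^l with hQdef
  have hcase : (lam = mu ∧ P*Q = Q*P) ∨ (lam = -mu ∧ P*Qᵀ = Qᵀ*P)
      ∨ (lam ≠ mu ∧ lam ≠ -mu) := by
    rcases eq_or_ne lam mu with h | h
    · refine Or.inl ⟨h, ?_⟩
      rw [hPdef, hQdef, h]
      exact ((Commute.refl (M + mu•A)).pow_pow j l).eq
    rcases eq_or_ne lam (-mu) with h2 | h2
    · refine Or.inr (Or.inl ⟨h2, ?_⟩)
      have hQT : Qᵀ = (-(M + lam•A))^l := by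
        rw [hQdef, Matrix.transpose_pow, Matrix.transpose_add, hM, Matrix.transpose_smul, hA]
        congr 1
        rw [h2, neg_add, neg_smul, neg_neg]
      rw [hQT, hPdef]
      exact ((Commute.refl (M + lam•A)).neg_right.pow_pow j l).eq
    · exact Or.inr (Or.inr ⟨h, h2⟩)
  have hmain := main_aux M A P Q (P - Pᵀ) (P + Pᵀ) (Q - Qᵀ) (Q + Qᵀ) hM lam mu
    rfl rfl rfl rfl
    (comm_skewPart M A hM hA lam j) (comm_symPart M A hM hA lam j)
    (comm_skewPart M A hM hA mu l) (comm_symPart M A hM hA mu l) hcase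
  have hred : M * (skewPart P * skewPart Q - skewPart Q * skewPart P)
      = ((1:ℝ)/4) • (M * ((P - Pᵀ)*(Q - Qᵀ) - (Q - Qᵀ)*(P - Pᵀ))) := by
    simp only [skewPart, smul_sub, sub_mul, mul_sub, smul_mul_assoc, mul_smul_comm,
      smul_smul]
    match_scalars <;> norm_num
  rw [hred, trace_smul, hmain, smul_zero]
end

section
/- Let A be a real diagonal n×n matrix. Then for every M ∈ so(n), every j ∈ ℕ, every λ ∈ ℝ, and every X ∈ so(n) with XA = AX: tr( M · [ π((M + λA)^j), X ] ) = 0, where π(P) = (P − Pᵀ)/2. (This says the Manakov integrals tr((M+λA)^k) Poisson commute with all linear functions on the isotropy subalgebra so(n)_A = {X ∈ so(n) : XA = AX} with respect to the Lie–Poisson bracket on so(n).) -/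
open Matrix

lemma skew_trace_skewPart {n : ℕ} (S P : Matrix (Fin n) (Fin n) ℝ) (hS : Sᵀ = -S) :
    (S * skewPart P).trace = (S * P).trace := by
  have h1 : (S * Pᵀ).trace = -(S * P).trace := by
    have : (S * Pᵀ).trace = ((S * Pᵀ)ᵀ).trace := (trace_transpose _).symm
    rw [this, transpose_mul, transpose_transpose, hS, mul_neg, trace_neg,
      trace_mul_comm]
  simp only [skewPart, Matrix.mul_smul, trace_smul, Matrix.mul_sub, trace_sub, h1, smul_eq_mul]
  ring

/-- For a real diagonal matrix `A`, every `M ∈ so(n)`, `j ∈ ℕ`, `λ ∈ ℝ`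
and every `X ∈ so(n)` commuting with `A`: `tr(M · [π((M + λA)^j), X]) = 0`, i.e. the
Manakov integrals Poisson commute with all linear functions on the isotropy subalgebra
`so(n)_A` with respect to the Lie–Poisson bracket on `so(n)`. -/
theorem manakov_integrals_commute_with_noether (n : ℕ) (a : Fin n → ℝ)
    (M : Matrix (Fin n) (Fin n) ℝ) (hM : Mᵀ = -M)
    (j : ℕ) (lam : ℝ)
    (X : Matrix (Fin n) (Fin n) ℝ) (hX : Xᵀ = -X)
    (hXA : X * Matrix.diagonal a = Matrix.diagonal a * X) :
    (M * (skewPart ((M + lam • Matrix.diagonal a) ^ j) * X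
          - X * skewPart ((M + lam • Matrix.diagonal a) ^ j))).trace = 0 := by
  set A := Matrix.diagonal a with hA
  set B := M + lam • A with hB
  set π := skewPart (B ^ j) with hπ
  have hSskew : (X * M - M * X)ᵀ = -(X * M - M * X) := by
    rw [transpose_sub, transpose_mul, transpose_mul, hM, hX]
    noncomm_ring
  have step1 : (M * (π * X - X * π)).trace = ((X * M - M * X) * π).trace := by
    simp only [Matrix.mul_sub, Matrix.sub_mul, trace_sub, mul_assoc]
    congr 1
    rw [trace_mul_comm M (π * X), mul_assoc, trace_mul_comm π (X * M), mul_assoc]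
  rw [step1, skew_trace_skewPart _ _ hSskew]
  have hXB : X * M - M * X = X * B - B * X := by
    rw [hB]
    simp only [Matrix.mul_add, Matrix.add_mul, Matrix.mul_smul, Matrix.smul_mul, hXA]
    abel
  rw [hXB, Matrix.sub_mul, trace_sub, mul_assoc, mul_assoc,
    trace_mul_comm B (X * B ^ j), mul_assoc, ← pow_succ, ← pow_succ', sub_self]
end

section
/- Let n = 2k and let M = m_1·(E_1∧E_n) + m_2·(E_2∧E_{n−1}) + ⋯ + m_k·(E_k∧E_{k+1}) ∈ so(n, ℂ), where m_1,…,m_k ∈ ℂ are nonzero with m_i² pairwise distinct. Then the centralizer of M in so(n, ℂ), namely {ξ ∈ so(n,ℂ) : [ξ, M] = 0}, is exactly the k-dimensional linear span of E_1∧E_n, E_2∧E_{n−1}, …, E_k∧E_{k+1}; in particular M is a regular element of so(n,ℂ). -/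
open Matrix

/-- `E_i ∧ E_j = E_i E_jᵀ − E_j E_iᵀ`, the elementary skew-symmetric matrix. -/
noncomputable def wedge {n : ℕ} (i j : Fin n) : Matrix (Fin n) (Fin n) ℂ :=
  Matrix.single i j 1 - Matrix.single j i 1

/-- The anti-diagonal basis element `E_i ∧ E_{n+1−i}` of `so(2k, ℂ)` (zero-based:
`E_i ∧ E_{2k−1−i}` for `i = 0, …, k−1`). -/
noncomputable def antidiagWedge (k : ℕ) (i : Fin k) :
    Matrix (Fin (2 * k)) (Fin (2 * k)) ℂ :=
  wedge ⟨i, by omega⟩ ⟨2 * k - 1 - i, by omega⟩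

/-!
Squaring `M` gives `-diag(d)` with `d = (m₁², …, m_k², m_k², …, m₁²)`. Since the `mᵢ²` are
distinct, a matrix commuting with `M²` can only have nonzero entries at positions `(a, b)` with
`b = a` or `b = n - 1 - a`; if it is also skew, its diagonal vanishes, so it is anti-diagonal and
skew, i.e. a combination of the `Eᵢ ∧ E_{n+1-i}`. Conversely, skew anti-diagonal matrices pairwise
commute, because the product of two anti-diagonal matrices is diagonal.
-/

namespace Matrix

variable {R : Type*} {n : ℕ}

def IsAntidiagonal [Zero R] (A : Matrix (Fin n) (Fin n) R) : Prop :=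
  ∀ a b, b ≠ a.rev → A a b = 0

variable (R n) in
def skewAntidiagonal [CommRing R] : Submodule R (Matrix (Fin n) (Fin n) R) where
  carrier := {A | Aᵀ = -A ∧ A.IsAntidiagonal}
  add_mem' := by
    rintro A B ⟨hA, hA'⟩ ⟨hB, hB'⟩
    refine ⟨by rw [transpose_add, hA, hB, neg_add], fun a b hab => ?_⟩
    rw [add_apply, hA' a b hab, hB' a b hab, add_zero]
  zero_mem' := ⟨by simp, fun _ _ _ => rfl⟩
  smul_mem' := by
    rintro c A ⟨hA, hA'⟩
    refine ⟨by rw [transpose_smul, hA, smul_neg], fun a b hab => ?_⟩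
    rw [smul_apply, hA' a b hab, smul_zero]

theorem apply_eq_neg_of_transpose_eq_neg [Neg R] {A : Matrix (Fin n) (Fin n) R} (hA : Aᵀ = -A)
    (a b : Fin n) : A b a = -A a b :=
  congrFun (congrFun hA a) b

theorem IsAntidiagonal.mul_eq_diagonal [NonUnitalNonAssocSemiring R]
    {A B : Matrix (Fin n) (Fin n) R} (hA : A.IsAntidiagonal) (hB : B.IsAntidiagonal) :
    A * B = diagonal fun a => A a a.rev * B a.rev a := by
  ext a b
  rw [mul_apply, Finset.sum_eq_single a.rev (fun j _ hj => by rw [hA a j hj, zero_mul])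
    (by simp), diagonal_apply]
  split_ifs with hab
  · rw [hab]
  · rw [hB a.rev b (by rw [Fin.rev_rev]; exact Ne.symm hab), mul_zero]

theorem commute_of_mem_skewAntidiagonal [CommRing R] {A B : Matrix (Fin n) (Fin n) R}
    (hA : A ∈ skewAntidiagonal R n) (hB : B ∈ skewAntidiagonal R n) : Commute A B := by
  rw [Commute, SemiconjBy, hA.2.mul_eq_diagonal hB.2, hB.2.mul_eq_diagonal hA.2]
  congr 1
  ext a
  rw [apply_eq_neg_of_transpose_eq_neg hA.1, apply_eq_neg_of_transpose_eq_neg hB.1]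
  ring

theorem apply_eq_zero_of_commute_diagonal [CommRing R] [NoZeroDivisors R] {d : Fin n → R}
    {ξ : Matrix (Fin n) (Fin n) R} (h : Commute (diagonal d) ξ) {a b : Fin n} (hab : d a ≠ d b) :
    ξ a b = 0 := by
  have hab' := congrFun (congrFun h.eq a) b
  rw [diagonal_mul, mul_diagonal] at hab'
  have : (d a - d b) * ξ a b = 0 := by linear_combination hab'
  exact (mul_eq_zero.1 this).resolve_left (sub_ne_zero.2 hab)

theorem mem_skewAntidiagonal_of_commute [CommRing R] [NoZeroDivisors R] [IsAddTorsionFree R]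
    {A ξ : Matrix (Fin n) (Fin n) R} (hA : A ∈ skewAntidiagonal R n)
    (hsep : ∀ a b, A a a.rev ^ 2 = A b b.rev ^ 2 → b = a ∨ b = a.rev)
    (hξ : ξᵀ = -ξ) (hAξ : Commute A ξ) : ξ ∈ skewAntidiagonal R n := by
  have hsq : A * A = diagonal fun a => -A a a.rev ^ 2 := by
    rw [hA.2.mul_eq_diagonal hA.2]
    congr 1
    ext a
    rw [apply_eq_neg_of_transpose_eq_neg hA.1]
    ring
  have hcomm : Commute (diagonal fun a => -A a a.rev ^ 2) ξ := hsq ▸ hAξ.mul_left hAξ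
  refine ⟨hξ, fun a b hb => ?_⟩
  by_cases hba : b = a
  · subst hba
    exact self_eq_neg.1 (apply_eq_neg_of_transpose_eq_neg hξ b b)
  · refine apply_eq_zero_of_commute_diagonal hcomm fun h => ?_
    rcases hsep a b (neg_inj.1 h) with h' | h'
    exacts [hba h', hb h']

end Matrix

theorem wedge_transpose {n : ℕ} (i j : Fin n) : (wedge i j)ᵀ = -wedge i j := by
  rw [wedge, transpose_sub, transpose_single, transpose_single, neg_sub]

theorem wedge_apply {n : ℕ} (i j a b : Fin n) :
    wedge i j a b = (if i = a ∧ j = b then 1 else 0) - (if j = a ∧ i = b then 1 else 0) := by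
  rw [wedge, Matrix.sub_apply, single_apply, single_apply]

theorem wedge_rev_mem_skewAntidiagonal {n : ℕ} (r : Fin n) :
    wedge r r.rev ∈ skewAntidiagonal ℂ n := by
  refine ⟨wedge_transpose r r.rev, fun a b hab => ?_⟩
  rw [wedge_apply, if_neg, if_neg, sub_zero]
  · rintro ⟨rfl, rfl⟩
    exact hab (Fin.rev_rev _).symm
  · rintro ⟨rfl, rfl⟩
    exact hab rfl

namespace antidiagWedge

variable {k : ℕ}

def row (i : Fin k) : Fin (2 * k) := ⟨i, by omega⟩

theorem eq_wedge_row (i : Fin k) : antidiagWedge k i = wedge (row i) (row i).rev := by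
  show wedge (row i) _ = _
  congr 1
  rw [Fin.ext_iff, Fin.val_rev]
  simp only [row]
  omega

theorem exists_row_eq_or_rev_eq (a : Fin (2 * k)) : ∃ i : Fin k, row i = a ∨ (row i).rev = a := by
  by_cases ha : (a : ℕ) < k
  · exact ⟨⟨a, ha⟩, Or.inl rfl⟩
  · exact ⟨⟨a.rev, by rw [Fin.val_rev]; omega⟩, Or.inr (Fin.rev_eq_iff.2 rfl)⟩

theorem apply_row_row_rev (i j : Fin k) :
    antidiagWedge k i (row j) (row j).rev = if i = j then 1 else 0 := by
  have hlow : ¬((row i).rev = row j ∧ row i = (row j).rev) := fun h => by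
    have := congrArg Fin.val h.2
    rw [Fin.val_rev] at this
    simp only [row] at this
    omega
  rw [eq_wedge_row, wedge_apply, if_neg hlow, sub_zero]
  simp only [Fin.rev_inj, and_self, row, Fin.mk.injEq, Fin.val_inj]

theorem sum_smul_apply_row_row_rev (c : Fin k → ℂ) (j : Fin k) :
    (∑ i, c i • antidiagWedge k i) (row j) (row j).rev = c j := by
  simp [Matrix.sum_apply, apply_row_row_rev]

theorem linearIndependent : LinearIndependent ℂ (antidiagWedge k) := by
  refine Fintype.linearIndependent_iff.2 fun c hc j => ?_
  rw [← sum_smul_apply_row_row_rev c j, hc, Matrix.zero_apply]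

theorem mem_skewAntidiagonal (i : Fin k) : antidiagWedge k i ∈ skewAntidiagonal ℂ (2 * k) := by
  rw [eq_wedge_row]
  exact wedge_rev_mem_skewAntidiagonal _

theorem eq_of_apply_row_row_rev_eq {A B : Matrix (Fin (2 * k)) (Fin (2 * k)) ℂ}
    (hA : A ∈ skewAntidiagonal ℂ (2 * k)) (hB : B ∈ skewAntidiagonal ℂ (2 * k))
    (h : ∀ j, A (row j) (row j).rev = B (row j) (row j).rev) : A = B := by
  ext a b
  by_cases hb : b = a.rev
  · subst hb
    obtain ⟨j, rfl | rfl⟩ := exists_row_eq_or_rev_eq a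
    · exact h j
    · rw [Fin.rev_rev, apply_eq_neg_of_transpose_eq_neg hA.1,
        apply_eq_neg_of_transpose_eq_neg hB.1, h j]
  · rw [hA.2 a b hb, hB.2 a b hb]

theorem span_eq_skewAntidiagonal :
    Submodule.span ℂ (Set.range (antidiagWedge k)) = skewAntidiagonal ℂ (2 * k) := by
  refine le_antisymm (Submodule.span_le.2 (Set.range_subset_iff.2 mem_skewAntidiagonal))
    fun ξ hξ => (Submodule.mem_span_range_iff_exists_fun ℂ).2 ⟨fun i => ξ (row i) (row i).rev, ?_⟩
  refine eq_of_apply_row_row_rev_eq ?_ hξ (sum_smul_apply_row_row_rev _)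
  exact Submodule.sum_mem _ fun i _ => Submodule.smul_mem _ _ (mem_skewAntidiagonal i)

theorem sum_smul_mem_skewAntidiagonal (c : Fin k → ℂ) :
    ∑ i, c i • antidiagWedge k i ∈ skewAntidiagonal ℂ (2 * k) := by
  rw [← span_eq_skewAntidiagonal]
  exact Submodule.sum_mem _ fun i _ => Submodule.smul_mem _ _ (Submodule.subset_span ⟨i, rfl⟩)

theorem eq_or_eq_rev_of_sq_sum_smul_apply_rev_eq {c : Fin k → ℂ}
    (hc : Function.Injective fun i => c i ^ 2) (a b : Fin (2 * k)) :
    (∑ i, c i • antidiagWedge k i) a a.rev ^ 2 = (∑ i, c i • antidiagWedge k i) b b.rev ^ 2 →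
      b = a ∨ b = a.rev := by
  have hpair (a : Fin (2 * k)) : ∃ j, (row j = a ∨ (row j).rev = a) ∧
      (∑ i, c i • antidiagWedge k i) a a.rev ^ 2 = c j ^ 2 := by
    obtain ⟨i, rfl | rfl⟩ := exists_row_eq_or_rev_eq a
    · exact ⟨i, Or.inl rfl, by rw [sum_smul_apply_row_row_rev]⟩
    · refine ⟨i, Or.inr rfl, ?_⟩
      rw [Fin.rev_rev, apply_eq_neg_of_transpose_eq_neg (sum_smul_mem_skewAntidiagonal c).1,
        sum_smul_apply_row_row_rev, neg_sq]
  intro h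
  obtain ⟨i, ha, hai⟩ := hpair a
  obtain ⟨j, hb, hbj⟩ := hpair b
  obtain rfl : i = j := hc (by simp only [← hai, ← hbj, h])
  rcases ha with rfl | rfl <;> rcases hb with rfl | rfl <;> simp

end antidiagWedge

open antidiagWedge in
theorem centralizer_of_antidiagonal_element_general (k : ℕ) (m : Fin k → ℂ)
    (hm2 : Function.Injective fun i => m i ^ 2) :
    {ξ : Matrix (Fin (2 * k)) (Fin (2 * k)) ℂ | ξᵀ = -ξ ∧
        ξ * (∑ i, m i • antidiagWedge k i) = (∑ i, m i • antidiagWedge k i) * ξ}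
      = ↑(Submodule.span ℂ (Set.range (antidiagWedge k))) ∧
    LinearIndependent ℂ (antidiagWedge k) := by
  refine ⟨?_, linearIndependent⟩
  have hM := sum_smul_mem_skewAntidiagonal m
  ext ξ
  rw [Set.mem_ofPred_eq, SetLike.mem_coe, span_eq_skewAntidiagonal]
  constructor
  · rintro ⟨hξ, hcomm⟩
    exact mem_skewAntidiagonal_of_commute hM (eq_or_eq_rev_of_sq_sum_smul_apply_rev_eq hm2) hξ
      hcomm.symm
  · intro hξ
    exact ⟨hξ.1, commute_of_mem_skewAntidiagonal hξ hM⟩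

/-- For `n = 2k` and `M = Σ m_i · (E_i ∧ E_{n+1−i}) ∈ so(n, ℂ)` with the
`m_i` nonzero and `m_i²` pairwise distinct, the centralizer of `M` in `so(n, ℂ)` is
exactly the `k`-dimensional linear span of `E_1∧E_n, …, E_k∧E_{k+1}`; in particular
`M` is a regular element of `so(n, ℂ)`. -/
theorem centralizer_of_antidiagonal_element (k : ℕ) (m : Fin k → ℂ)
    (hm : ∀ i, m i ≠ 0) (hm2 : Function.Injective fun i => m i ^ 2) :
    {ξ : Matrix (Fin (2 * k)) (Fin (2 * k)) ℂ | ξᵀ = -ξ ∧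
        ξ * (∑ i, m i • antidiagWedge k i) = (∑ i, m i • antidiagWedge k i) * ξ}
      = ↑(Submodule.span ℂ (Set.range (antidiagWedge k))) ∧
    LinearIndependent ℂ (antidiagWedge k) :=
  centralizer_of_antidiagonal_element_general k m hm2
end

section
/- Let n = n′ + m with m ≥ 3, and embed so(m) into so(n) as the lower-right m×m diagonal block and so(n′) as the upper-left n′×n′ diagonal block. Then the centralizer of the embedded so(m) in so(n) is exactly the embedded so(n′): {X ∈ so(n) : [X, ι(Y)] = 0 for all Y ∈ so(m)} = {ι′(X′) : X′ ∈ so(n′)}, where ι and ι′ denote the block embeddings. -/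
/-!
Write `X = fromBlocks A B C D`. Commuting with `fromBlocks 0 0 0 Y` means `B Y = 0`, `Y C = 0` and
`D Y = Y D`. Testing these against the elementary skew matrices `E_ij - E_ji` gives `B = 0` as
soon as `m ≥ 2`, and kills the off-diagonal entry `D_ki` as soon as there is a third index
`j ∉ {k, i}`, which is where `m ≥ 3` enters. Skew-symmetry of `X` then kills the diagonal of `D`
and gives `C = -Bᵀ = 0`.
-/

open Matrix

namespace Matrix

section Skew

variable {ι κ R : Type*} [Fintype ι] [DecidableEq ι] [Ring R]

omit [Fintype ι] in
lemma transpose_single_sub_single (i j : ι) :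
    (single i j (1 : R) - single j i 1)ᵀ = -(single i j 1 - single j i 1) := by
  rw [transpose_sub, transpose_single, transpose_single, neg_sub]

lemma mul_single_sub_single_apply (M : Matrix κ ι R) {i j : ι} (hij : i ≠ j) (a : κ) :
    (M * (single i j (1 : R) - single j i 1) : Matrix κ ι R) a j = M a i := by
  simp [Matrix.mul_sub, mul_single_apply_of_ne _ _ _ _ _ hij.symm]

lemma single_sub_single_mul_apply_of_ne (M : Matrix ι κ R) {i j k : ι} (hki : k ≠ i)
    (hkj : k ≠ j) (b : κ) :
    ((single i j (1 : R) - single j i 1) * M : Matrix ι κ R) k b = 0 := by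
  simp [Matrix.sub_mul, hki, hkj]

lemma eq_zero_of_forall_skew_mul_eq_zero [Nontrivial ι] {B : Matrix κ ι R}
    (h : ∀ Y : Matrix ι ι R, Yᵀ = -Y → B * Y = 0) : B = 0 := by
  ext a i
  obtain ⟨j, hij⟩ := exists_ne i
  rw [← mul_single_sub_single_apply B hij.symm a, h _ (transpose_single_sub_single i j)]
  rfl

lemma apply_eq_zero_of_forall_skew_commute (hι : 3 ≤ Fintype.card ι) {D : Matrix ι ι R}
    (h : ∀ Y : Matrix ι ι R, Yᵀ = -Y → D * Y = Y * D) {k i : ι} (hki : k ≠ i) :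
    D k i = 0 := by
  obtain ⟨j, hjk, hji⟩ := Cardinal.exists_ne_ne_of_three_le
    (by rw [Cardinal.mk_fintype]; exact_mod_cast hι) k i
  have hkj := congr_fun₂ (h _ (transpose_single_sub_single i j)) k j
  rwa [mul_single_sub_single_apply D hji.symm,
    single_sub_single_mul_apply_of_ne D hki hjk.symm] at hkj

omit [Fintype ι] [DecidableEq ι] in
lemma apply_self_eq_zero_of_transpose_eq_neg [NoZeroDivisors R] [CharZero R]
    {A : Matrix ι ι R} (hA : Aᵀ = -A) (i : ι) : A i i = 0 :=
  CharZero.eq_neg_self_iff.mp (congr_fun₂ hA i i)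

lemma eq_zero_of_transpose_eq_neg_of_forall_skew_commute [NoZeroDivisors R] [CharZero R]
    (hι : 3 ≤ Fintype.card ι) {D : Matrix ι ι R} (hD : Dᵀ = -D)
    (h : ∀ Y : Matrix ι ι R, Yᵀ = -Y → D * Y = Y * D) : D = 0 := by
  ext k i
  rcases eq_or_ne k i with rfl | hki
  · exact apply_self_eq_zero_of_transpose_eq_neg hD k
  · exact apply_eq_zero_of_forall_skew_commute hι h hki

end Skew

section Blocks

variable {n m R : Type*} [Fintype n] [Fintype m] [Ring R]

omit [Fintype n] [Fintype m] in
lemma transpose_fromBlocks_eq_neg_iff (A : Matrix n n R) (B : Matrix n m R) (C : Matrix m n R)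
    (D : Matrix m m R) :
    (fromBlocks A B C D)ᵀ = -fromBlocks A B C D ↔
      Aᵀ = -A ∧ Cᵀ = -B ∧ Bᵀ = -C ∧ Dᵀ = -D := by
  rw [fromBlocks_transpose, fromBlocks_neg, fromBlocks_inj]

lemma fromBlocks_mul_fromBlocks_zero_eq_iff (A : Matrix n n R) (B : Matrix n m R)
    (C : Matrix m n R) (D Y : Matrix m m R) :
    fromBlocks A B C D * fromBlocks 0 0 0 Y = fromBlocks 0 0 0 Y * fromBlocks A B C D ↔
      B * Y = 0 ∧ Y * C = 0 ∧ D * Y = Y * D := by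
  simp [fromBlocks_multiply, fromBlocks_inj, eq_comm (a := (0 : Matrix m n R))]

end Blocks

end Matrix

/-- For `n = n′ + m` with `m ≥ 3`, embedding `so(m)` as the lower-right
diagonal block and `so(n′)` as the upper-left diagonal block of `so(n)`, the centralizer
of the embedded `so(m)` in `so(n)` is exactly the embedded `so(n′)`. -/
theorem centralizer_of_embedded_so (n' m : ℕ) (hm : 3 ≤ m) :
    {X : Matrix (Fin n' ⊕ Fin m) (Fin n' ⊕ Fin m) ℝ | Xᵀ = -X ∧
        ∀ Y : Matrix (Fin m) (Fin m) ℝ, Yᵀ = -Y →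
          X * Matrix.fromBlocks 0 0 0 Y = Matrix.fromBlocks 0 0 0 Y * X}
      = {Z : Matrix (Fin n' ⊕ Fin m) (Fin n' ⊕ Fin m) ℝ |
          ∃ X' : Matrix (Fin n') (Fin n') ℝ, X'ᵀ = -X' ∧
            Z = Matrix.fromBlocks X' 0 0 0} := by
  ext X
  obtain ⟨A, B, C, D, rfl⟩ : ∃ A B C D, X = fromBlocks A B C D :=
    ⟨_, _, _, _, (fromBlocks_toBlocks X).symm⟩
  simp only [Set.mem_ofPred_eq, transpose_fromBlocks_eq_neg_iff,
    fromBlocks_mul_fromBlocks_zero_eq_iff]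
  constructor
  · rintro ⟨⟨hA, -, hBC, hD⟩, hcomm⟩
    have : Nontrivial (Fin m) := Fin.nontrivial_iff_two_le.mpr (by omega)
    have hB : B = 0 := eq_zero_of_forall_skew_mul_eq_zero fun Y hY => (hcomm Y hY).1
    have hC : C = 0 := by rw [← neg_neg C, ← hBC, hB, transpose_zero, neg_zero]
    have hD : D = 0 := eq_zero_of_transpose_eq_neg_of_forall_skew_commute
      (by rwa [Fintype.card_fin]) hD fun Y hY => (hcomm Y hY).2.2
    exact ⟨A, hA, by rw [hB, hC, hD]⟩
  · rintro ⟨X', hX', h⟩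
    obtain ⟨rfl, rfl, rfl, rfl⟩ := fromBlocks_inj.mp h
    simp [hX']
end
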